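/- Let M : Ω × [0,∞) → [0,∞) satisfy the φ-regularity condition M(x,s) ≤ φ(|x−y|, s) M(y,s) for all x, y ∈ Ω̄ with |x−y| ≤ 1/2, where φ(·,s) and φ(τ,·) are nondecreasing and φ ≥ 1. Suppose also s ↦ M(y,s) is locally Lipschitz for each y. Fix x ∈ Ω and ε ∈ (0, 1/2], and define M̃_{x,ε}(s) = inf_{y ∈ B(x, ε/2)} M(y,s) and its convex envelope (M̃_{x,ε})**. Then for all y ∈ B(x, ε/2) and all s ≥ 0 with (M̃_{x,ε})**(s) > 0: M(y,s) / (M̃_{x,ε})**(s) ≤ 4 (φ(ε,s))². -/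

import Mathlib

set_option maxHeartbeats 1000000


/-- The convex envelope on `[0, ∞)` of a function `g : ℝ → ℝ`: the pointwise supremum of
all convex minorants of `g` on `[0, ∞)`; it coincides with the second Fenchel conjugate
`g**` for the functions under consideration. -/
noncomputable def convexEnvelopeOnIci (g : ℝ → ℝ) (s : ℝ) : ℝ :=
  sSup {v : ℝ | ∃ h : ℝ → ℝ, ConvexOn ℝ (Set.Ici 0) h ∧ (∀ t, 0 ≤ t → h t ≤ g t) ∧ v = h s}

theorem stmt_12 {N : ℕ} (Ω : Set (EuclideanSpace ℝ (Fin N))) (hΩ : IsOpen Ω)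
    (M : EuclideanSpace ℝ (Fin N) → ℝ → ℝ)
    (hM0 : ∀ x, M x 0 = 0)
    (hMconv : ∀ x, ConvexOn ℝ (Set.Ici 0) (M x))
    (hMmono : ∀ x, StrictMonoOn (M x) (Set.Ici 0))
    (hMnonneg : ∀ x s, 0 ≤ s → 0 ≤ M x s)
    (hMlip : ∀ y R, 0 < R → ∃ L : NNReal, LipschitzOnWith L (M y) (Set.Icc 0 R))
    (φ : ℝ → ℝ → ℝ)
    (hφ1 : ∀ τ s, 1 ≤ φ τ s)
    (hφmono1 : ∀ s, MonotoneOn (fun τ => φ τ s) (Set.Icc 0 (1 / 2)))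
    (hφmono2 : ∀ τ, Monotone (φ τ))
    (hreg : ∀ x y, dist x y ≤ 1 / 2 → ∀ s, 0 ≤ s → M x s ≤ φ (dist x y) s * M y s)
    (x : EuclideanSpace ℝ (Fin N)) (hx : x ∈ Ω) (ε : ℝ) (hε : ε ∈ Set.Ioc 0 (1 / 2)) :
    ∀ y ∈ Metric.ball x (ε / 2), ∀ s : ℝ, 0 ≤ s →
      0 < convexEnvelopeOnIci (fun t => ⨅ z : Metric.ball x (ε / 2), M z.1 t) s →
      M y s / convexEnvelopeOnIci (fun t => ⨅ z : Metric.ball x (ε / 2), M z.1 t) s ≤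
        4 * (φ ε s) ^ 2 := by
  intro y hy s hs0 hpos
  classical
  obtain ⟨hε0, hεh⟩ := hε
  have hxB : x ∈ Metric.ball x (ε / 2) := Metric.mem_ball_self (by positivity)
  haveI : Nonempty ↥(Metric.ball x (ε / 2)) := ⟨⟨x, hxB⟩⟩
  set φ₀ := φ ε s with hφ₀def
  have hφ₀1 : (1 : ℝ) ≤ φ₀ := hφ1 ε s
  have hφ₀pos : (0 : ℝ) < φ₀ := by linarith
  set g : ℝ → ℝ := fun t => ⨅ z : Metric.ball x (ε / 2), M z.1 t with hgdef
  have hbdd : ∀ t : ℝ, 0 ≤ t →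
      BddBelow (Set.range fun z : ↥(Metric.ball x (ε / 2)) => M z.1 t) := by
    intro t ht
    exact ⟨0, by rintro v ⟨z, rfl⟩; exact hMnonneg z.1 t ht⟩
  have hgle : ∀ t : ℝ, 0 ≤ t → ∀ z : ↥(Metric.ball x (ε / 2)), g t ≤ M z.1 t := by
    intro t ht z
    exact ciInf_le (hbdd t ht) z
  have hgnn : ∀ t : ℝ, 0 ≤ t → 0 ≤ g t := by
    intro t ht
    exact le_ciInf fun z => hMnonneg z.1 t ht
  have hg0 : g 0 = 0 := by
    simp only [hgdef, hM0]
    exact ciInf_const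
  have hgmono : ∀ a b : ℝ, 0 ≤ a → a ≤ b → g a ≤ g b := by
    intro a b ha hab
    refine le_ciInf fun z => le_trans (hgle a ha z) ?_
    exact (hMmono z.1).monotoneOn (Set.mem_Ici.mpr ha) (Set.mem_Ici.mpr (ha.trans hab)) hab
  -- comparability: each M z is within factor φ₀ of the infimum, for arguments ≤ s
  have hub : ∀ (z : ↥(Metric.ball x (ε / 2))) (u : ℝ), 0 ≤ u → u ≤ s →
      M z.1 u ≤ φ₀ * g u := by
    intro z u hu0 hus
    have h1 : ∀ w : ↥(Metric.ball x (ε / 2)), M z.1 u ≤ φ₀ * M w.1 u := by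
      intro w
      have hz2 := Metric.mem_ball.mp z.2
      have hw2 := Metric.mem_ball.mp w.2
      have hzw : dist (z.1 : EuclideanSpace ℝ (Fin N)) w.1 < ε := by
        calc dist (z.1 : EuclideanSpace ℝ (Fin N)) w.1
            ≤ dist (z.1 : EuclideanSpace ℝ (Fin N)) x + dist (w.1 : EuclideanSpace ℝ (Fin N)) x :=
              dist_triangle_right _ _ _
          _ < ε / 2 + ε / 2 := by linarith
          _ = ε := by ring
      have hhalf : dist (z.1 : EuclideanSpace ℝ (Fin N)) w.1 ≤ 1 / 2 := le_trans hzw.le hεh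
      have hφd : φ (dist (z.1 : EuclideanSpace ℝ (Fin N)) w.1) u ≤ φ₀ := by
        have a1 : φ (dist (z.1 : EuclideanSpace ℝ (Fin N)) w.1) u ≤ φ ε u :=
          hφmono1 u ⟨dist_nonneg, hhalf⟩ ⟨hε0.le, hεh⟩ hzw.le
        have a2 : φ ε u ≤ φ ε s := hφmono2 ε hus
        linarith
      calc M z.1 u ≤ φ (dist (z.1 : EuclideanSpace ℝ (Fin N)) w.1) u * M w.1 u :=
            hreg z.1 w.1 hhalf u hu0
        _ ≤ φ₀ * M w.1 u := mul_le_mul_of_nonneg_right hφd (hMnonneg w.1 u hu0)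
    have h2 : M z.1 u / φ₀ ≤ g u := by
      refine le_ciInf fun w => ?_
      rw [div_le_iff₀ hφ₀pos]
      calc M z.1 u ≤ φ₀ * M w.1 u := h1 w
        _ = M w.1 u * φ₀ := by ring
    calc M z.1 u = φ₀ * (M z.1 u / φ₀) := by field_simp
      _ ≤ φ₀ * g u := mul_le_mul_of_nonneg_left h2 hφ₀pos.le
  set C := g s with hCdef
  -- bounds on the envelope set
  have hSb : BddAbove {v : ℝ | ∃ h : ℝ → ℝ, ConvexOn ℝ (Set.Ici 0) h ∧
      (∀ t, 0 ≤ t → h t ≤ g t) ∧ v = h s} := by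
    refine ⟨C, ?_⟩
    rintro v ⟨h, _, hle, rfl⟩
    exact hle s hs0
  have hSne : Set.Nonempty {v : ℝ | ∃ h : ℝ → ℝ, ConvexOn ℝ (Set.Ici 0) h ∧
      (∀ t, 0 ≤ t → h t ≤ g t) ∧ v = h s} :=
    ⟨0, fun _ => 0, convexOn_const 0 (convex_Ici 0), fun t ht => hgnn t ht, rfl⟩
  have hEleC : convexEnvelopeOnIci g s ≤ C := by
    refine csSup_le hSne ?_
    rintro v ⟨h, _, hle, rfl⟩
    exact hle s hs0
  have hCpos : 0 < C := lt_of_lt_of_le hpos hEleC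
  have hspos : 0 < s := by
    rcases eq_or_lt_of_le hs0 with h | h
    · exfalso
      have : C = 0 := by rw [hCdef, ← h, hg0]
      linarith
    · exact h
  set T := {t : ℝ | t ∈ Set.Icc 0 s ∧ g t ≤ C / (2 * φ₀)} with hTdef
  have hT0 : (0 : ℝ) ∈ T := ⟨⟨le_refl 0, hs0⟩, by rw [hg0]; positivity⟩
  have hTb : BddAbove T := ⟨s, fun t ht => ht.1.2⟩
  set r := sSup T with hrdef
  have hr0 : 0 ≤ r := le_csSup hTb hT0
  have hrs : r ≤ s := csSup_le ⟨0, hT0⟩ fun t ht => ht.1.2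
  have hgsmall : ∀ u : ℝ, 0 ≤ u → u < r → g u ≤ C / (2 * φ₀) := by
    intro u hu0 hur
    obtain ⟨t, htT, hut⟩ := exists_lt_of_lt_csSup ⟨0, hT0⟩ hur
    exact le_trans (hgmono u t hu0 hut.le) htT.2
  have hrlt : r < s := by
    by_contra hcon
    push_neg at hcon
    have hre : r = s := le_antisymm hrs hcon
    obtain ⟨K, hK⟩ := hMlip x (s + 1) (by linarith)
    have hK1 : (0 : ℝ) < (K : ℝ) + 1 := by positivity
    set u := max 0 (s - C / (4 * ((K : ℝ) + 1))) with hudef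
    have hCK : 0 < C / (4 * ((K : ℝ) + 1)) := by positivity
    have hu0 : 0 ≤ u := le_max_left _ _
    have hus : u < s := max_lt hspos (by linarith)
    have huu : s - u ≤ C / (4 * ((K : ℝ) + 1)) := by
      have := le_max_right 0 (s - C / (4 * ((K : ℝ) + 1)))
      have h2 : s - C / (4 * ((K : ℝ) + 1)) ≤ u := this
      linarith
    have hgu : g u ≤ C / (2 * φ₀) := hgsmall u hu0 (by rw [hre]; exact hus)
    have hxu : M x u ≤ φ₀ * g u := hub ⟨x, hxB⟩ u hu0 hus.le
    have hCx : C ≤ M x s := hgle s hs0 ⟨x, hxB⟩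
    have hdist : dist (M x s) (M x u) ≤ (K : ℝ) * dist s u :=
      hK.dist_le_mul s ⟨hs0, by linarith⟩ u ⟨hu0, by linarith⟩
    rw [Real.dist_eq, Real.dist_eq] at hdist
    have h1 : M x s - M x u ≤ (K : ℝ) * (s - u) := by
      have a1 : M x s - M x u ≤ |M x s - M x u| := le_abs_self _
      have a2 : |s - u| = s - u := abs_of_nonneg (by linarith)
      rw [a2] at hdist
      linarith
    have h2 : (K : ℝ) * (s - u) ≤ (K : ℝ) * (C / (4 * ((K : ℝ) + 1))) :=
      mul_le_mul_of_nonneg_left huu K.coe_nonneg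
    have h3 : (K : ℝ) * (C / (4 * ((K : ℝ) + 1))) ≤ C / 4 := by
      rw [show (K : ℝ) * (C / (4 * ((K : ℝ) + 1))) = (K : ℝ) * C / (4 * ((K : ℝ) + 1)) by ring]
      rw [div_le_div_iff₀ (by positivity) (by norm_num : (0 : ℝ) < 4)]
      nlinarith [K.coe_nonneg, hCpos.le]
    have h4 : φ₀ * g u ≤ φ₀ * (C / (2 * φ₀)) := mul_le_mul_of_nonneg_left hgu hφ₀pos.le
    have h5 : φ₀ * (C / (2 * φ₀)) = C / 2 := by
      field_simp
    linarith
  have hsr : 0 < s - r := by linarith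
  -- pick the anchor point u₀
  obtain ⟨u₀, hu₀0, hu₀s, hgu₀, hu₀r⟩ :
      ∃ u₀ : ℝ, 0 ≤ u₀ ∧ u₀ < s ∧ g u₀ ≤ C / (2 * φ₀) ∧ s - u₀ ≤ 2 * φ₀ * (s - r) := by
    by_cases hcase : s ≤ 2 * φ₀ * (s - r)
    · exact ⟨0, le_refl 0, hspos, by rw [hg0]; positivity, by linarith⟩
    · push_neg at hcase
      have hlt : s - 2 * φ₀ * (s - r) < r := by nlinarith
      obtain ⟨t, htT, hlt2⟩ := exists_lt_of_lt_csSup ⟨0, hT0⟩ hlt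
      exact ⟨t, htT.1.1, lt_of_le_of_lt (le_csSup hTb htT) hrlt, htT.2, by linarith⟩
  set D := 4 * φ₀ * (s - r) with hDdef
  have hDpos : 0 < D := mul_pos (mul_pos (by norm_num) hφ₀pos) hsr
  set L : ℝ → ℝ := fun t => C / D * (t - r) with hLdef
  have hdpos : 0 < C / D := div_pos hCpos hDpos
  have hLconv : ConvexOn ℝ (Set.Ici (0 : ℝ)) L := by
    refine ⟨convex_Ici 0, ?_⟩
    intro p hp q hq a b ha hb hab
    simp only [hLdef, smul_eq_mul]
    exact le_of_eq (by linear_combination (C / D * r) * hab)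
  have hLmin : ∀ t : ℝ, 0 ≤ t → L t ≤ g t := by
    intro t ht
    rcases le_or_gt t r with h1 | h1
    · have hL0 : L t ≤ 0 := mul_nonpos_iff.mpr (Or.inl ⟨hdpos.le, by linarith⟩)
      exact hL0.trans (hgnn t ht)
    rcases le_or_gt t s with h2 | h2
    · have hnot : C / (2 * φ₀) < g t := by
        by_contra hcc
        push_neg at hcc
        have htT : t ∈ T := ⟨⟨ht, h2⟩, hcc⟩
        have : t ≤ r := le_csSup hTb htT
        linarith
      have e1 : L t ≤ C / D * (s - r) := mul_le_mul_of_nonneg_left (by linarith) hdpos.le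
      have e2 : C / D * (s - r) = C / (4 * φ₀) := by
        rw [hDdef]
        field_simp
      have e3 : C / (4 * φ₀) ≤ C / (2 * φ₀) := by
        rw [div_le_div_iff₀ (by positivity) (by positivity)]
        nlinarith [mul_nonneg hCpos.le hφ₀pos.le]
      linarith
    · refine le_ciInf fun z => ?_
      have hb : C ≤ M z.1 s := hgle s hs0 z
      have ha : M z.1 u₀ ≤ C / 2 := by
        have b1 := hub z u₀ hu₀0 hu₀s.le
        have b2 : φ₀ * g u₀ ≤ φ₀ * (C / (2 * φ₀)) := mul_le_mul_of_nonneg_left hgu₀ hφ₀pos.le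
        have b3 : φ₀ * (C / (2 * φ₀)) = C / 2 := by
          field_simp
        linarith
      have hsu : 0 < s - u₀ := by linarith
      have hts : 0 < t - s := by linarith
      have hslope := (hMconv z.1).slope_mono_adjacent (Set.mem_Ici.mpr hu₀0)
        (Set.mem_Ici.mpr (by linarith : (0 : ℝ) ≤ t)) hu₀s h2
      rw [div_le_div_iff₀ hsu hts] at hslope
      have hkey1 : C / 2 * (t - s) ≤ (M z.1 t - M z.1 s) * (s - u₀) := by
        have c1 : C / 2 * (t - s) ≤ (M z.1 s - M z.1 u₀) * (t - s) :=
          mul_le_mul_of_nonneg_right (by linarith) hts.le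
        linarith
      have hcb : 0 ≤ M z.1 t - M z.1 s := by
        have hmul : 0 < (M z.1 t - M z.1 s) * (s - u₀) :=
          lt_of_lt_of_le (mul_pos (by linarith : (0:ℝ) < C / 2) hts) hkey1
        rcases mul_pos_iff.mp hmul with ⟨hpos1, _⟩ | ⟨_, hneg2⟩
        · exact hpos1.le
        · linarith
      have hkey2 : (M z.1 t - M z.1 s) * (s - u₀) ≤ (M z.1 t - M z.1 s) * (2 * φ₀ * (s - r)) :=
        mul_le_mul_of_nonneg_left hu₀r hcb
      have hkey3 : C * (t - s) ≤ (M z.1 t - M z.1 s) * D := by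
        rw [hDdef]
        nlinarith
      have hkey4 : C * (s - r) ≤ M z.1 s * D := by
        rw [hDdef]
        nlinarith [mul_le_mul_of_nonneg_right hb (mul_nonneg (by positivity : (0:ℝ) ≤ 4 * φ₀) hsr.le),
          mul_pos hCpos hsr, mul_nonneg (mul_nonneg hCpos.le hφ₀pos.le) hsr.le]
      show C / D * (t - r) ≤ M z.1 t
      rw [div_mul_eq_mul_div, div_le_iff₀ hDpos]
      nlinarith
  have hLs : L s = C / (4 * φ₀) := by
    simp only [hLdef, hDdef]
    field_simp
  have hEge : C / (4 * φ₀) ≤ convexEnvelopeOnIci g s := by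
    refine le_csSup hSb ?_
    exact ⟨L, hLconv, hLmin, hLs.symm⟩
  have hMy : M y s ≤ φ₀ * C := hub ⟨y, hy⟩ s hs0 le_rfl
  rw [div_le_iff₀ hpos]
  have hkey : 4 * φ₀ ^ 2 * (C / (4 * φ₀)) = φ₀ * C := by
    field_simp
  nlinarith [mul_le_mul_of_nonneg_left hEge (show (0 : ℝ) ≤ 4 * φ₀ ^ 2 by positivity)]
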